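/- If a probability vector of length d has the form λ1 = λ2 = ... = λ_{k-1}, λ_k arbitrary with λ_{k-1} ≥ λ_k ≥ 0, and λ_{k+1} = ... = λ_d = 0, with purity γ = ∑ λi², then 1/k ≤ γ ≤ 1/(k-1); in particular the integer k with this property is uniquely determined by γ (when 1/γ is not an integer). -/

import Mathlib

/-! The lower bound is Cauchy–Schwarz for the `k` nonzero entries. For the upper bound, with
`n = k - 1` one has `1 - n γ = λ_k (2n (λ₁ - λ_k) + (n + 1) λ_k) ≥ 0`. Finally
`1/k ≤ γ ≤ 1/(k-1)` says `k - 1 ≤ 1/γ ≤ k`, so when `1/γ` is not an integer `k = ⌈1/γ⌉`. -/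

lemma sq_mul_add_le_mul_mul_sq_add_sq {n : ℝ} (hn : 0 ≤ n) (a b : ℝ) :
    (n * a + b) ^ 2 ≤ (n + 1) * (n * a ^ 2 + b ^ 2) := by
  nlinarith [mul_nonneg hn (sq_nonneg (a - b))]

lemma mul_mul_sq_add_sq_le_sq_mul_add {n a b : ℝ} (hn : 0 ≤ n) (hb : 0 ≤ b) (hba : b ≤ a) :
    n * (n * a ^ 2 + b ^ 2) ≤ (n * a + b) ^ 2 := by
  have key : (n * a + b) ^ 2 - n * (n * a ^ 2 + b ^ 2) = b * (2 * n * (a - b) + (n + 1) * b) := by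
    ring
  have : 0 ≤ b * (2 * n * (a - b) + (n + 1) * b) := by
    have := mul_nonneg hn (sub_nonneg.2 hba)
    positivity
  linarith

lemma ceil_inv_eq_of_mem_Icc {k : ℕ} (hk : 2 ≤ k) {γ : ℝ} (hlow : 1 / (k : ℝ) ≤ γ)
    (hhigh : γ ≤ 1 / ((k : ℝ) - 1)) (hγ : ¬ ∃ m : ℤ, 1 / γ = (m : ℝ)) :
    ⌈1 / γ⌉ = (k : ℤ) := by
  have hk' : (1 : ℝ) < k := by exact_mod_cast hk
  have hγpos : 0 < γ := lt_of_lt_of_le (by positivity) hlow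
  have hle : 1 / γ ≤ k := by
    rw [div_le_iff₀ hγpos]
    rw [div_le_iff₀ (by linarith)] at hlow
    linarith
  have hge : (k : ℝ) - 1 ≤ 1 / γ := by
    rw [le_div_iff₀ hγpos]
    rw [le_div_iff₀ (by linarith)] at hhigh
    linarith
  have hlt : (k : ℝ) - 1 < 1 / γ :=
    hge.lt_of_ne fun h => hγ ⟨(k : ℤ) - 1, by push_cast; exact h.symm⟩
  rw [Int.ceil_eq_iff]
  push_cast
  exact ⟨hlt, hle⟩

theorem stmt3 (k : ℕ) (hk : 2 ≤ k) (l1 lk γ : ℝ) (hord : lk ≤ l1) (h0 : 0 ≤ lk)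
    (hsum : ((k:ℝ)-1) * l1 + lk = 1) (hpur : ((k:ℝ)-1) * l1 ^ 2 + lk ^ 2 = γ) :
    (1/(k:ℝ) ≤ γ ∧ γ ≤ 1/((k:ℝ)-1)) ∧
    (∀ k' : ℕ, 2 ≤ k' → 1/(k':ℝ) ≤ γ → γ ≤ 1/((k':ℝ)-1) →
      (¬ ∃ m : ℤ, 1/γ = (m:ℝ)) → k' = k) := by
  have hn : (0 : ℝ) < (k : ℝ) - 1 := by
    have : (2 : ℝ) ≤ k := by exact_mod_cast hk
    linarith
  have hlow : 1 / (k : ℝ) ≤ γ := by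
    have h := sq_mul_add_le_mul_mul_sq_add_sq hn.le l1 lk
    rw [hsum, hpur, sub_add_cancel] at h
    rw [div_le_iff₀ (by linarith)]
    linarith
  have hhigh : γ ≤ 1 / ((k : ℝ) - 1) := by
    have h := mul_mul_sq_add_sq_le_sq_mul_add hn.le h0 hord
    rw [hsum, hpur] at h
    rw [le_div_iff₀ hn]
    linarith
  refine ⟨⟨hlow, hhigh⟩, fun k' hk' hlow' hhigh' hγ => ?_⟩
  have := (ceil_inv_eq_of_mem_Icc hk' hlow' hhigh' hγ).symm.trans
    (ceil_inv_eq_of_mem_Icc hk hlow hhigh hγ)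
  exact_mod_cast this
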